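/- Let n ≥ 5 be odd, m ≥ 4. There exists a radio labeling of the subgraph G''(t) of G_{m,n} = S_m □ P_n (induced by the stars at indices t and t+(n−1)/2, using distances and diameter of G_{m,n}) whose span equals mn + m − (n−3)/2; hence the minimum span over the vertices of G''(t) of a radio labeling of G_{m,n} restricted to G''(t) is exactly mn + m − (n−3)/2. -/

import Mathlib

open SimpleGraph

/-- The star graph on `m` vertices: vertex `0` is the center, adjacent to all others. -/
def starGraph (m : ℕ) : SimpleGraph (Fin m) :=
  SimpleGraph.fromRel (fun a _ => (a : ℕ) = 0)

/-- The stacked-book graph `G_{m,n} = S_m □ P_n`. -/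
def stackedBook (m n : ℕ) : SimpleGraph (Fin m × Fin n) :=
  starGraph m □ SimpleGraph.pathGraph n

/-- A radio labeling of `G`: `|f u - f v| ≥ diam G + 1 - d(u,v)` for all distinct `u, v`. -/
def IsRadioLabeling {V : Type*} (G : SimpleGraph V) (f : V → ℕ) : Prop :=
  ∀ u v : V, u ≠ v → (G.diam : ℤ) + 1 - G.dist u v ≤ |(f u : ℤ) - (f v : ℤ)|

/-- The span of a labeling on a finite vertex set: max label minus min label. -/
noncomputable def labelSpan {V : Type*} [Fintype V] (f : V → ℕ) : ℕ :=
  Finset.univ.sup f - sInf (Set.range f)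

/-- The radio number: minimum span over all radio labelings. -/
noncomputable def radioNumber {V : Type*} [Fintype V] (G : SimpleGraph V) : ℕ :=
  sInf {s | ∃ f : V → ℕ, IsRadioLabeling G f ∧ labelSpan f = s}

/-! ### Auxiliary lemmas -/

section BoxDist

variable {α β : Type*} {G : SimpleGraph α} {H : SimpleGraph β}

lemma boxProd_dist_le_walk (hG : G.Connected) (hH : H.Connected) {x y : α × β}
    (w : (G □ H).Walk x y) : G.dist x.1 y.1 + H.dist x.2 y.2 ≤ w.length := by
  induction w with
  | nil => simp
  | @cons x z y h w ih =>
    rw [Walk.length_cons]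
    rcases h with ⟨h1, h2⟩ | ⟨h1, h2⟩
    · calc G.dist x.1 y.1 + H.dist x.2 y.2
          ≤ (G.dist x.1 z.1 + G.dist z.1 y.1) + H.dist z.2 y.2 := by
            rw [h2]; exact Nat.add_le_add_right (hG.dist_triangle) _
        _ ≤ 1 + (G.dist z.1 y.1 + H.dist z.2 y.2) := by
            have : G.dist x.1 z.1 ≤ 1 := by rw [← dist_eq_one_iff_adj.mpr h1]
            omega
        _ ≤ w.length + 1 := by omega
    · calc G.dist x.1 y.1 + H.dist x.2 y.2
          ≤ G.dist z.1 y.1 + (H.dist x.2 z.2 + H.dist z.2 y.2) := by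
            rw [h2]; exact Nat.add_le_add_left (hH.dist_triangle) _
        _ ≤ 1 + (G.dist z.1 y.1 + H.dist z.2 y.2) := by
            have : H.dist x.2 z.2 ≤ 1 := by rw [← dist_eq_one_iff_adj.mpr h1]
            omega
        _ ≤ w.length + 1 := by omega

lemma boxProd_dist (hG : G.Connected) (hH : H.Connected) (x y : α × β) :
    (G □ H).dist x y = G.dist x.1 y.1 + H.dist x.2 y.2 := by
  refine le_antisymm ?_ ?_
  · obtain ⟨w1, hw1⟩ := (hG x.1 y.1).exists_walk_length_eq_dist
    obtain ⟨w2, hw2⟩ := (hH x.2 y.2).exists_walk_length_eq_dist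
    have := dist_le ((w1.boxProdLeft H x.2).append (w2.boxProdRight G y.1))
    rw [Walk.length_append] at this
    have l1 : (w1.boxProdLeft H x.2).length = w1.length := Walk.length_map _ _
    have l2 : (w2.boxProdRight G y.1).length = w2.length := Walk.length_map _ _
    rw [l1, l2, hw1, hw2] at this
    exact this
  · obtain ⟨w, hw⟩ := ((hG.boxProd hH) x y).exists_walk_length_eq_dist
    rw [← hw]
    exact boxProd_dist_le_walk hG hH w

end BoxDist

section StarPath

lemma starGraph_adj {m : ℕ} {i j : Fin m} :
    (_root_.starGraph m).Adj i j ↔ i ≠ j ∧ ((i : ℕ) = 0 ∨ (j : ℕ) = 0) := by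
  simp [_root_.starGraph, fromRel_adj, or_comm]

lemma starGraph_connected {m : ℕ} (hm : 1 ≤ m) : (_root_.starGraph m).Connected := by
  have : Nonempty (Fin m) := ⟨⟨0, hm⟩⟩
  rw [connected_iff_exists_forall_reachable]
  refine ⟨⟨0, hm⟩, fun v => ?_⟩
  by_cases hv : v = ⟨0, hm⟩
  · subst hv; rfl
  · exact Adj.reachable (starGraph_adj.mpr ⟨fun h => hv h.symm, Or.inl rfl⟩)

/-- star distance function -/
def dstar {m : ℕ} (i j : Fin m) : ℕ :=
  if i = j then 0 else if (i : ℕ) = 0 ∨ (j : ℕ) = 0 then 1 else 2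

lemma starGraph_dist {m : ℕ} (hm : 1 ≤ m) (i j : Fin m) :
    (_root_.starGraph m).dist i j = dstar i j := by
  unfold dstar
  split_ifs with h1 h2
  · subst h1; simp
  · exact dist_eq_one_iff_adj.mpr (starGraph_adj.mpr ⟨h1, h2⟩)
  · push_neg at h2
    have hz : (⟨0, hm⟩ : Fin m) ≠ i ∧ (⟨0, hm⟩ : Fin m) ≠ j := by
      constructor <;> intro h <;> simp [← h] at h2
    refine le_antisymm ?_ ?_
    · simpa using dist_le (Walk.cons (_root_.starGraph_adj.mpr ⟨fun h => hz.1 h.symm, Or.inr rfl⟩)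
          (Walk.cons (_root_.starGraph_adj.mpr ⟨hz.2, Or.inl rfl⟩) Walk.nil))
    · have hne : (_root_.starGraph m).dist i j ≠ 0 := by
        rw [Ne, dist_eq_zero_iff_eq_or_not_reachable]
        push_neg
        exact ⟨h1, (starGraph_connected hm).preconnected i j⟩
      have hne1 : (_root_.starGraph m).dist i j ≠ 1 := by
        rw [Ne, dist_eq_one_iff_adj, _root_.starGraph_adj]
        rintro ⟨-, h | h⟩ <;> omega
      omega

lemma pathGraph_walk_le {n : ℕ} {a b : Fin n} (w : (pathGraph n).Walk a b) :
    Nat.dist (a : ℕ) (b : ℕ) ≤ w.length := by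
  induction w with
  | nil => simp
  | @cons a c b h w ih =>
    rw [Walk.length_cons]
    have h1 : Nat.dist (a : ℕ) (c : ℕ) ≤ 1 := by
      rw [pathGraph_adj] at h
      rcases h with h | h <;> simp [Nat.dist] <;> omega
    have := Nat.dist.triangle_inequality (a : ℕ) (c : ℕ) (b : ℕ)
    omega

lemma pathGraph_dist_le {n : ℕ} : ∀ (d : ℕ) (a b : Fin n), (b : ℕ) = (a : ℕ) + d →
    (pathGraph n).dist a b ≤ d := by
  intro d
  induction d with
  | zero => intro a b h; have : a = b := Fin.ext (by omega); simp [this]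
  | succ d ih =>
    intro a b h
    have ha1 : (a : ℕ) + 1 < n := by have := b.isLt; omega
    set a' : Fin n := ⟨(a : ℕ) + 1, ha1⟩ with ha'
    have hadj : (pathGraph n).Adj a a' := pathGraph_adj.mpr (Or.inl rfl)
    have hc : (pathGraph n).Connected := by
      obtain ⟨n', rfl⟩ : ∃ n', n = n' + 1 := ⟨n - 1, by have := a.isLt; omega⟩
      exact pathGraph_connected n'
    obtain ⟨w, hw⟩ := (hc.preconnected a' b).exists_walk_length_eq_dist
    have h2 := dist_le (Walk.cons hadj w)
    rw [Walk.length_cons, hw] at h2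
    have := ih a' b (by simp [ha']; omega)
    omega

lemma pathGraph_dist {n : ℕ} (a b : Fin n) :
    (pathGraph n).dist a b = Nat.dist (a : ℕ) (b : ℕ) := by
  have hn : 1 ≤ n := a.pos
  refine le_antisymm ?_ ?_
  · rcases le_total (a : ℕ) (b : ℕ) with h | h
    · have := pathGraph_dist_le ((b : ℕ) - (a : ℕ)) a b (by omega)
      rwa [Nat.dist_eq_sub_of_le h]
    · have := pathGraph_dist_le ((a : ℕ) - (b : ℕ)) b a (by omega)
      rw [Nat.dist_comm, Nat.dist_eq_sub_of_le h]
      rwa [dist_comm]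
  · obtain ⟨n', rfl⟩ : ∃ n', n = n' + 1 := ⟨n - 1, by omega⟩
    obtain ⟨w, hw⟩ := ((pathGraph_connected n').preconnected a b).exists_walk_length_eq_dist
    rw [← hw]
    exact pathGraph_walk_le w

end StarPath

section BookDist

lemma stackedBook_connected {m n : ℕ} (hm : 1 ≤ m) (hn : 1 ≤ n) :
    (stackedBook m n).Connected := by
  obtain ⟨n', rfl⟩ : ∃ n', n = n' + 1 := ⟨n - 1, by omega⟩
  exact (starGraph_connected hm).boxProd (pathGraph_connected n')

lemma stackedBook_dist {m n : ℕ} (hm : 1 ≤ m) (hn : 1 ≤ n) (u v : Fin m × Fin n) :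
    (stackedBook m n).dist u v = dstar u.1 v.1 + Nat.dist (u.2 : ℕ) (v.2 : ℕ) := by
  obtain ⟨n', rfl⟩ : ∃ n', n = n' + 1 := ⟨n - 1, by omega⟩
  rw [stackedBook, boxProd_dist (starGraph_connected hm) (pathGraph_connected n'),
    starGraph_dist hm, pathGraph_dist]

lemma stackedBook_dist_le {m n : ℕ} (hm : 1 ≤ m) (hn : 1 ≤ n) (u v : Fin m × Fin n) :
    (stackedBook m n).dist u v ≤ n + 1 := by
  rw [stackedBook_dist hm hn]
  have h1 : dstar u.1 v.1 ≤ 2 := by unfold dstar; split_ifs <;> omega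
  have h2 : Nat.dist (u.2 : ℕ) (v.2 : ℕ) ≤ n - 1 := by
    have := u.2.isLt; have := v.2.isLt
    simp [Nat.dist]; omega
  omega

lemma stackedBook_ediam_ne_top {m n : ℕ} (hm : 1 ≤ m) (hn : 1 ≤ n) :
    (stackedBook m n).ediam ≠ ⊤ := by
  have : Nonempty (Fin m × Fin n) := ⟨⟨⟨0, hm⟩, ⟨0, hn⟩⟩⟩
  obtain ⟨u, v, huv⟩ := (stackedBook m n).exists_edist_eq_ediam_of_finite
  rw [← huv]
  obtain ⟨w, hw⟩ := (((stackedBook_connected hm hn).preconnected) u v).exists_walk_length_eq_edist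
  rw [← hw]
  simp

lemma stackedBook_diam {m n : ℕ} (hm : 3 ≤ m) (hn : 2 ≤ n) :
    (stackedBook m n).diam = n + 1 := by
  have hm1 : 1 ≤ m := by omega
  have hn1 : 1 ≤ n := by omega
  have : Nonempty (Fin m × Fin n) := ⟨⟨⟨0, hm1⟩, ⟨0, hn1⟩⟩⟩
  refine le_antisymm ?_ ?_
  · obtain ⟨u, v, huv⟩ := (stackedBook m n).exists_dist_eq_diam
    rw [← huv]
    exact stackedBook_dist_le hm1 hn1 u v
  · have h := dist_le_diam (stackedBook_ediam_ne_top hm1 hn1)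
      (u := (⟨1, by omega⟩, ⟨0, hn1⟩)) (v := (⟨2, by omega⟩, ⟨n - 1, by omega⟩))
    rw [stackedBook_dist hm1 hn1] at h
    simp only [dstar] at h
    rw [if_neg (by simp [Fin.ext_iff] : ¬((⟨1, by omega⟩ : Fin m) = ⟨2, by omega⟩))] at h
    simp [Nat.dist] at h
    omega

end BookDist

/-! ### The labeling -/

/-- position of a vertex in the labeling order -/
def posF (m t : ℕ) {n : ℕ} (u : Fin m × Fin n) : ℕ :=
  if (u.2 : ℕ) = t - 1 then (if (u.1 : ℕ) = 0 then 0 else 2 * (u.1 : ℕ))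
  else if (u.1 : ℕ) = 0 then 2 * m - 1
  else if (u.1 : ℕ) = 1 then 2 * m - 3
  else 2 * (u.1 : ℕ) - 3

/-- the labeling -/
def labF (m t k : ℕ) {n : ℕ} (u : Fin m × Fin n) : ℕ :=
  posF m t u * (k + 1) +
    (if posF m t u = 0 then 0 else if posF m t u = 2 * m - 1 then 2 else 1)

/-- membership in the two-star set -/
def inS (t k : ℕ) {m n : ℕ} (p : Fin m × Fin n) : Prop :=
  (p.2 : ℕ) = t - 1 ∨ (p.2 : ℕ) = t + k - 1

set_option maxHeartbeats 1000000

section Main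

variable {m n t k : ℕ}

lemma dstar_eq {i j : Fin m} :
    dstar i j = if (i : ℕ) = (j : ℕ) then 0 else
      if (i : ℕ) = 0 ∨ (j : ℕ) = 0 then 1 else 2 := by
  simp [dstar, Fin.ext_iff]

lemma dist_S (hm : 4 ≤ m) (hk : 2 ≤ k) (hn2 : n = 2 * k + 1) (ht1 : 1 ≤ t)
    (ht2 : t + k ≤ n) {u v : Fin m × Fin n} (hu : inS t k u) (hv : inS t k v) :
    (stackedBook m n).dist u v =
      (if (u.1 : ℕ) = (v.1 : ℕ) then 0 else
        if (u.1 : ℕ) = 0 ∨ (v.1 : ℕ) = 0 then 1 else 2) +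
      (if (u.2 : ℕ) = (v.2 : ℕ) then 0 else k) := by
  rw [stackedBook_dist (by omega) (by omega), dstar_eq]
  congr 1
  rcases hu with hu | hu <;> rcases hv with hv | hv <;>
    simp [Nat.dist, hu, hv] <;> split_ifs <;> omega

lemma posF_lt (hm : 4 ≤ m) {u : Fin m × Fin n} : posF m t u ≤ 2 * m - 1 := by
  have := u.1.isLt
  unfold posF; split_ifs <;> omega

lemma posF_inj (hm : 4 ≤ m) (hk : 2 ≤ k) (hn2 : n = 2 * k + 1) (ht1 : 1 ≤ t)
    (ht2 : t + k ≤ n) {u v : Fin m × Fin n} (hu : inS t k u) (hv : inS t k v)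
    (h : posF m t u = posF m t v) : u = v := by
  have hiu := u.1.isLt; have hiv := v.1.isLt
  have hcc : ¬ (t + k - 1 = t - 1) := by omega
  have : (u.1 : ℕ) = (v.1 : ℕ) ∧ (u.2 : ℕ) = (v.2 : ℕ) := by
    unfold posF at h
    rcases hu with hu | hu <;> rcases hv with hv | hv <;>
      rw [hu, hv] at h <;> simp only [if_pos rfl, if_neg hcc] at h
    · exact ⟨by split_ifs at h <;> omega, hu.trans hv.symm⟩
    · exfalso; split_ifs at h <;> omega
    · exfalso; split_ifs at h <;> omega
    · exact ⟨by split_ifs at h <;> omega, hu.trans hv.symm⟩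
  exact Prod.ext (Fin.ext this.1) (Fin.ext this.2)

lemma posF_c1 {u : Fin m × Fin n} (h : (u.2 : ℕ) = t - 1) :
    posF m t u = if (u.1 : ℕ) = 0 then 0 else 2 * (u.1 : ℕ) := by
  unfold posF; rw [if_pos h]

lemma posF_c2 (hcc : ¬((t + k - 1 : ℕ) = t - 1)) {u : Fin m × Fin n}
    (h : (u.2 : ℕ) = t + k - 1) :
    posF m t u = if (u.1 : ℕ) = 0 then 2 * m - 1
      else if (u.1 : ℕ) = 1 then 2 * m - 3 else 2 * (u.1 : ℕ) - 3 := by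
  unfold posF; rw [h, if_neg hcc]

lemma cond_consec (hm : 4 ≤ m) (hk : 2 ≤ k) (hn2 : n = 2 * k + 1) (ht1 : 1 ≤ t)
    (ht2 : t + k ≤ n) {u v : Fin m × Fin n} (hu : inS t k u) (hv : inS t k v)
    (hQ : posF m t v = posF m t u + 1) :
    2 * k + 3 + labF m t k u ≤ (stackedBook m n).dist u v + labF m t k v := by
  have hcc : ¬((t + k - 1 : ℕ) = t - 1) := by omega
  have hiu := u.1.isLt; have hiv := v.1.isLt
  have hd := dist_S hm hk hn2 ht1 ht2 hu hv
  have hprod : posF m t v * (k + 1) = posF m t u * (k + 1) + (k + 1) := by rw [hQ]; ring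
  unfold labF
  rw [hd]
  rcases hu with hu | hu <;> rcases hv with hv | hv <;> rw [hu, hv]
  · have hEu := posF_c1 (t := t) hu; have hEv := posF_c1 (t := t) hv
    rw [if_pos rfl]
    split_ifs at hEu hEv ⊢ <;> omega
  · have hEu := posF_c1 (t := t) hu; have hEv := posF_c2 hcc hv
    rw [if_neg (by omega : ¬((t - 1 : ℕ) = t + k - 1))]
    split_ifs at hEu hEv ⊢ <;> omega
  · have hEu := posF_c2 hcc hu; have hEv := posF_c1 (t := t) hv
    rw [if_neg hcc]
    split_ifs at hEu hEv ⊢ <;> omega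
  · have hEu := posF_c2 hcc hu; have hEv := posF_c2 hcc hv
    rw [if_pos rfl]
    split_ifs at hEu hEv ⊢ <;> omega

lemma cond_lt (hm : 4 ≤ m) (hk : 2 ≤ k) (hn2 : n = 2 * k + 1) (ht1 : 1 ≤ t)
    (ht2 : t + k ≤ n) {u v : Fin m × Fin n} (hu : inS t k u) (hv : inS t k v)
    (hlt : posF m t u < posF m t v) :
    2 * k + 3 + labF m t k u ≤ (stackedBook m n).dist u v + labF m t k v := by
  rcases eq_or_lt_of_le (Nat.succ_le_of_lt hlt) with hQ | hQ
  · exact cond_consec hm hk hn2 ht1 ht2 hu hv hQ.symm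
  · have hd := dist_S hm hk hn2 ht1 ht2 hu hv
    have hne : ¬((u.1 : ℕ) = (v.1 : ℕ) ∧ (u.2 : ℕ) = (v.2 : ℕ)) := by
      rintro ⟨h1, h2⟩
      have : u = v := Prod.ext (Fin.ext h1) (Fin.ext h2)
      subst this; omega
    have hdist : 1 ≤ (stackedBook m n).dist u v := by
      rw [hd]
      by_cases h1 : (u.1 : ℕ) = (v.1 : ℕ) <;> by_cases h2 : (u.2 : ℕ) = (v.2 : ℕ)
      · exact absurd ⟨h1, h2⟩ hne
      all_goals split_ifs <;> omega
    have hprod : (posF m t u + 2) * (k + 1) ≤ posF m t v * (k + 1) :=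
      Nat.mul_le_mul_right _ (by omega)
    have hexp : (posF m t u + 2) * (k + 1) = posF m t u * (k + 1) + 2 * (k + 1) := by ring
    have hplt : posF m t u < 2 * m - 1 :=
      lt_of_lt_of_le hlt (posF_lt hm)
    unfold labF
    split_ifs <;> omega

lemma dist_le_S (hm : 4 ≤ m) (hk : 2 ≤ k) (hn2 : n = 2 * k + 1) (ht1 : 1 ≤ t)
    (ht2 : t + k ≤ n) {u v : Fin m × Fin n} (hu : inS t k u) (hv : inS t k v) :
    (stackedBook m n).dist u v ≤ k + 2 := by
  rw [dist_S hm hk hn2 ht1 ht2 hu hv]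
  split_ifs <;> omega

lemma labF_le (hm : 4 ≤ m) {u : Fin m × Fin n} :
    labF m t k u ≤ (2 * m - 1) * (k + 1) + 2 := by
  have h1 : posF m t u * (k + 1) ≤ (2 * m - 1) * (k + 1) :=
    Nat.mul_le_mul_right _ (posF_lt hm)
  unfold labF
  split_ifs <;> omega

lemma span_val (hm : 4 ≤ m) (hk : 2 ≤ k) (hn2 : n = 2 * k + 1) :
    (2 * m - 1) * (k + 1) + 2 = m * n + m - (n - 3) / 2 := by
  obtain ⟨m', rfl⟩ : ∃ m', m = m' + 4 := ⟨m - 4, by omega⟩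
  have e1 : (m' + 4) * n + (m' + 4) = 2 * (m' * k) + 2 * m' + 8 * k + 8 := by
    rw [hn2]; ring
  have e2 : (2 * (m' + 4) - 1) * (k + 1) = (2 * m' + 7) * (k + 1) := by
    have : 2 * (m' + 4) - 1 = 2 * m' + 7 := by omega
    rw [this]
  have e3 : (2 * m' + 7) * (k + 1) = 2 * (m' * k) + 2 * m' + 7 * k + 7 := by ring
  omega

end Main

set_option maxHeartbeats 1600000 in
/-- the minimum span over the `2m` vertices of `G''(t)` of a labeling satisfying
the radio condition (with distances and diameter of `G_{m,n}`) on those vertices is exactly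
`mn + m - (n-3)/2`. -/
theorem stmt16 (m n t : ℕ) (hm : 4 ≤ m) (hn : 5 ≤ n) (ho : Odd n)
    (ht1 : 1 ≤ t) (ht2 : t + (n - 1) / 2 ≤ n) :
    IsLeast {s | ∃ f : Fin m × Fin n → ℕ,
      (∀ u v : Fin m × Fin n,
          ((u.2 : ℕ) = t - 1 ∨ (u.2 : ℕ) = t + (n - 1) / 2 - 1) →
          ((v.2 : ℕ) = t - 1 ∨ (v.2 : ℕ) = t + (n - 1) / 2 - 1) → u ≠ v →
          ((stackedBook m n).diam : ℤ) + 1 - (stackedBook m n).dist u v ≤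
            |(f u : ℤ) - (f v : ℤ)|) ∧
      sSup (f '' {p : Fin m × Fin n |
          (p.2 : ℕ) = t - 1 ∨ (p.2 : ℕ) = t + (n - 1) / 2 - 1}) -
      sInf (f '' {p : Fin m × Fin n |
          (p.2 : ℕ) = t - 1 ∨ (p.2 : ℕ) = t + (n - 1) / 2 - 1}) = s}
      (m * n + m - (n - 3) / 2) := by
  classical
  obtain ⟨k, hk'⟩ := ho
  have hn2 : n = 2 * k + 1 := by omega
  have hk : 2 ≤ k := by omega
  have hk12 : (n - 1) / 2 = k := by omega
  rw [hk12] at ht2 ⊢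
  have hcc : ¬((t + k - 1 : ℕ) = t - 1) := by omega
  have hdiam : (stackedBook m n).diam = n + 1 := stackedBook_diam (by omega) (by omega)
  -- the two centers
  set ca : Fin m × Fin n := (⟨0, by omega⟩, ⟨t - 1, by omega⟩) with hca
  set cb : Fin m × Fin n := (⟨0, by omega⟩, ⟨t + k - 1, by omega⟩) with hcb
  have hcaS : inS t k ca := Or.inl rfl
  have hcbS : inS t k cb := Or.inr rfl
  have hca1 : (ca.1 : ℕ) = 0 := rfl
  have hca2 : (ca.2 : ℕ) = t - 1 := rfl
  have hcb1 : (cb.1 : ℕ) = 0 := rfl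
  have hcb2 : (cb.2 : ℕ) = t + k - 1 := rfl
  have hcab : ca ≠ cb := by
    intro h
    rw [Prod.ext_iff] at h
    have := congrArg Fin.val h.2
    rw [hca2, hcb2] at this
    omega
  constructor
  · -- membership: the labeling labF achieves the span
    refine ⟨labF m t k, fun u v hu hv huv => ?_, ?_⟩
    · have hp : posF m t u ≠ posF m t v :=
        fun h => huv (posF_inj hm hk hn2 ht1 ht2 hu hv h)
      rw [hdiam]
      have hd2 := dist_le_S hm hk hn2 ht1 ht2 hu hv
      rcases lt_or_gt_of_ne hp with h | h
      · have h1 := cond_lt hm hk hn2 ht1 ht2 hu hv h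
        have habs : |(labF m t k u : ℤ) - labF m t k v| =
            (labF m t k v : ℤ) - labF m t k u := by
          rw [abs_sub_comm]
          exact abs_of_nonneg (by push_cast; omega)
        rw [habs]; push_cast; omega
      · have h1 := cond_lt hm hk hn2 ht1 ht2 hv hu h
        rw [dist_comm] at h1
        have habs : |(labF m t k u : ℤ) - labF m t k v| =
            (labF m t k u : ℤ) - labF m t k v :=
          abs_of_nonneg (by push_cast; omega)
        rw [habs]; push_cast; omega
    · -- span computation
      have hfa : labF m t k ca = 0 := by
        have hp : posF m t ca = 0 := by unfold posF; rw [if_pos hca2, if_pos hca1]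
        unfold labF; rw [hp]; simp
      have hfb : labF m t k cb = (2 * m - 1) * (k + 1) + 2 := by
        have hp : posF m t cb = 2 * m - 1 := by
          unfold posF; rw [hcb2, if_neg hcc, if_pos hcb1]
        unfold labF; rw [hp, if_neg (by omega), if_pos rfl]
      have hmema : (0 : ℕ) ∈ labF m t k ''
          {p : Fin m × Fin n | (p.2 : ℕ) = t - 1 ∨ (p.2 : ℕ) = t + k - 1} :=
        ⟨ca, hcaS, hfa⟩
      have hmemb : ((2 * m - 1) * (k + 1) + 2 : ℕ) ∈ labF m t k ''
          {p : Fin m × Fin n | (p.2 : ℕ) = t - 1 ∨ (p.2 : ℕ) = t + k - 1} :=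
        ⟨cb, hcbS, hfb⟩
      have hsup : sSup (labF m t k ''
          {p : Fin m × Fin n | (p.2 : ℕ) = t - 1 ∨ (p.2 : ℕ) = t + k - 1}) =
          (2 * m - 1) * (k + 1) + 2 := by
        refine le_antisymm (csSup_le ⟨0, hmema⟩ ?_)
          (le_csSup ⟨(2 * m - 1) * (k + 1) + 2, ?_⟩ hmemb)
        · rintro y ⟨u, hu, rfl⟩
          exact labF_le hm
        · rintro y ⟨u, hu, rfl⟩
          exact labF_le hm
      have hinf : sInf (labF m t k ''
          {p : Fin m × Fin n | (p.2 : ℕ) = t - 1 ∨ (p.2 : ℕ) = t + k - 1}) = 0 :=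
        Nat.sInf_eq_zero.mpr (Or.inl hmema)
      rw [hsup, hinf, span_val hm hk hn2]
      exact Nat.sub_zero _
  · -- lower bound
    rintro s ⟨f, hf, rfl⟩
    set T : Finset (Fin m × Fin n) :=
      Finset.univ.filter (fun p => (p.2 : ℕ) = t - 1 ∨ (p.2 : ℕ) = t + k - 1) with hT
    have hmemT : ∀ p : Fin m × Fin n, p ∈ T ↔ inS t k p := by
      intro p; simp [hT, inS]
    have hTP : T = Finset.univ ×ˢ
        ({⟨t - 1, by omega⟩, ⟨t + k - 1, by omega⟩} : Finset (Fin n)) := by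
      ext p
      simp [hT, Fin.ext_iff]
    have hcardT : T.card = 2 * m := by
      rw [hTP, Finset.card_product, Finset.card_univ, Fintype.card_fin,
        Finset.card_insert_of_notMem (by simp [Fin.ext_iff]; omega),
        Finset.card_singleton]
      ring
    have hinj : Set.InjOn f ↑T := by
      intro u hu v hv hfe
      by_contra hne
      have h := hf u v ((hmemT u).1 hu) ((hmemT v).1 hv) hne
      rw [hdiam, hfe] at h
      simp only [sub_self, abs_zero] at h
      have hd := dist_le_S hm hk hn2 ht1 ht2 ((hmemT u).1 hu) ((hmemT v).1 hv)
      push_cast at h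
      omega
    have hcardI : (T.image f).card = 2 * m := by
      rw [Finset.card_image_of_injOn hinj, hcardT]
    set σ := (T.image f).orderIsoOfFin hcardI with hσ
    have hx : ∀ p : Fin (2 * m), ∃ u, u ∈ T ∧ f u = (σ p : ℕ) := by
      intro p
      have h2 : ((σ p : ℕ)) ∈ T.image f := (σ p).2
      rw [Finset.mem_image] at h2
      obtain ⟨u, hu, hfu⟩ := h2
      exact ⟨u, hu, hfu⟩
    choose x hxT hxf using hx
    have hmono : ∀ {p q : Fin (2 * m)}, p < q → f (x p) < f (x q) := by
      intro p q hpq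
      rw [hxf, hxf]
      exact Subtype.coe_lt_coe.mpr ((OrderIso.lt_iff_lt σ).mpr hpq)
    have hxne : ∀ {p q : Fin (2 * m)}, p < q → x p ≠ x q := by
      intro p q hpq h
      have := hmono hpq
      rw [h] at this
      omega
    -- positions of the centers
    have hcaT : ca ∈ T := (hmemT ca).2 hcaS
    have hcbT : cb ∈ T := (hmemT cb).2 hcbS
    obtain ⟨pa, hxa⟩ : ∃ pa : Fin (2 * m), x pa = ca := by
      refine ⟨σ.symm ⟨f ca, Finset.mem_image_of_mem f hcaT⟩, ?_⟩
      apply hinj (Finset.mem_coe.mpr (hxT _)) (Finset.mem_coe.mpr hcaT)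
      rw [hxf]
      simp
    obtain ⟨pb, hxb⟩ : ∃ pb : Fin (2 * m), x pb = cb := by
      refine ⟨σ.symm ⟨f cb, Finset.mem_image_of_mem f hcbT⟩, ?_⟩
      apply hinj (Finset.mem_coe.mpr (hxT _)) (Finset.mem_coe.mpr hcbT)
      rw [hxf]
      simp
    have hm2 : 2 ≤ 2 * m := by omega
    have hpalt := pa.isLt
    have hpblt := pb.isLt
    have hpab : pa ≠ pb := by
      intro h
      rw [h, hxb] at hxa
      exact hcab hxa.symm
    obtain ⟨qa, hqa⟩ : ∃ q, q = if (pa : ℕ) < 2 * m - 1 then (pa : ℕ) else (pa : ℕ) - 1 :=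
      ⟨_, rfl⟩
    obtain ⟨qb, hqb⟩ : ∃ q, q = if (pb : ℕ) < 2 * m - 1 then (pb : ℕ) else (pb : ℕ) - 1 :=
      ⟨_, rfl⟩
    have hqalt : qa < 2 * m - 1 := by
      rcases Nat.lt_or_ge (pa : ℕ) (2 * m - 1) with hsp | hsp
      · rw [hqa, if_pos hsp]; exact hsp
      · rw [hqa, if_neg (show ¬((pa : ℕ) < 2 * m - 1) by omega)]; omega
    have hqblt : qb < 2 * m - 1 := by
      rcases Nat.lt_or_ge (pb : ℕ) (2 * m - 1) with hsp | hsp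
      · rw [hqb, if_pos hsp]; exact hsp
      · rw [hqb, if_neg (show ¬((pb : ℕ) < 2 * m - 1) by omega)]; omega
    have hqamem : ∀ (p : ℕ) (h1 : p < 2 * m) (h2 : p + 1 < 2 * m), p = qa →
        x ⟨p, h1⟩ = ca ∨ x ⟨p + 1, h2⟩ = ca := by
      intro p h1 h2 hpqa
      rw [hqa] at hpqa
      rcases Nat.lt_or_ge (pa : ℕ) (2 * m - 1) with hsp | hsp
      · rw [if_pos hsp] at hpqa
        left; rw [← hxa]; congr 1; exact Fin.ext hpqa
      · rw [if_neg (show ¬((pa : ℕ) < 2 * m - 1) by omega)] at hpqa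
        right; rw [← hxa]; congr 1; exact Fin.ext (by simp only [Fin.val_mk]; omega)
    have hqbmem : ∀ (p : ℕ) (h1 : p < 2 * m) (h2 : p + 1 < 2 * m), p = qb →
        x ⟨p, h1⟩ = cb ∨ x ⟨p + 1, h2⟩ = cb := by
      intro p h1 h2 hpqb
      rw [hqb] at hpqb
      rcases Nat.lt_or_ge (pb : ℕ) (2 * m - 1) with hsp | hsp
      · rw [if_pos hsp] at hpqb
        left; rw [← hxb]; congr 1; exact Fin.ext hpqb
      · rw [if_neg (show ¬((pb : ℕ) < 2 * m - 1) by omega)] at hpqb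
        right; rw [← hxb]; congr 1; exact Fin.ext (by simp only [Fin.val_mk]; omega)
    -- distances involving centers
    have hdca : ∀ w : Fin m × Fin n, inS t k w →
        (stackedBook m n).dist ca w ≤ k + 1 := by
      intro w hw
      have hw2 := hw
      rw [dist_S hm hk hn2 ht1 ht2 hcaS hw]
      simp only [hca1, hca2]
      simp only [eq_self_iff_true, true_or, if_true]
      rcases hw2 with hw2 | hw2 <;> split_ifs <;> omega
    have hdcb : ∀ w : Fin m × Fin n, inS t k w →
        (stackedBook m n).dist cb w ≤ k + 1 := by
      intro w hw
      have hw2 := hw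
      rw [dist_S hm hk hn2 ht1 ht2 hcbS hw]
      simp only [hcb1, hcb2]
      simp only [eq_self_iff_true, true_or, if_true]
      rcases hw2 with hw2 | hw2 <;> split_ifs <;> omega
    have hdcab : (stackedBook m n).dist ca cb = k := by
      rw [dist_S hm hk hn2 ht1 ht2 hcaS hcbS]
      simp only [hca1, hca2, hcb1, hcb2]
      split_ifs <;> omega
    have hdcba : (stackedBook m n).dist cb ca = k := by
      rw [SimpleGraph.dist_comm]; exact hdcab
    have hdca' : ∀ w : Fin m × Fin n, inS t k w →
        (stackedBook m n).dist w ca ≤ k + 1 := fun w hw => by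
      rw [SimpleGraph.dist_comm]; exact hdca w hw
    have hdcb' : ∀ w : Fin m × Fin n, inS t k w →
        (stackedBook m n).dist w cb ≤ k + 1 := fun w hw => by
      rw [SimpleGraph.dist_comm]; exact hdcb w hw
    -- the telescoping function
    set F : ℕ → ℤ := fun p => if h : p < 2 * m then ((σ ⟨p, h⟩ : ℕ) : ℤ) else 0 with hF
    have key : ∀ p, p < 2 * m - 1 →
        (k + 1 : ℤ) + (if p = qa then 1 else 0) + (if p = qb then 1 else 0) ≤
          F (p + 1) - F p := by
      intro p hp
      have h1 : p < 2 * m := by omega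
      have h2 : p + 1 < 2 * m := by omega
      have hF1 : F p = ((f (x ⟨p, h1⟩) : ℕ) : ℤ) := by
        simp only [hF]; rw [dif_pos h1, hxf ⟨p, h1⟩]
      have hF2 : F (p + 1) = ((f (x ⟨p + 1, h2⟩) : ℕ) : ℤ) := by
        simp only [hF]; rw [dif_pos h2, hxf ⟨p + 1, h2⟩]
      set u := x (⟨p, h1⟩ : Fin (2 * m)) with hu_def
      set v := x (⟨p + 1, h2⟩ : Fin (2 * m)) with hv_def
      have hlt : f u < f v := hmono (Fin.mk_lt_mk.mpr (by omega))
      have hne : u ≠ v := hxne (Fin.mk_lt_mk.mpr (by omega))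
      have huS : inS t k u := (hmemT u).1 (hxT _)
      have hvS : inS t k v := (hmemT v).1 (hxT _)
      have hcond := hf u v huS hvS hne
      rw [hdiam] at hcond
      have habs : |(f u : ℤ) - f v| = (f v : ℤ) - f u := by
        rw [abs_sub_comm]
        exact abs_of_nonneg (by push_cast; omega)
      rw [habs] at hcond
      rw [hF1, hF2]
      -- case analysis on whether this gap touches a center
      by_cases hha : p = qa <;> by_cases hhb : p = qb
      · -- both centers: {u, v} = {ca, cb}
        rcases hqamem p h1 h2 hha with hua | hva <;>
          rcases hqbmem p h1 h2 hhb with hub | hvb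
        · exact absurd (hua.symm.trans hub) hcab
        · rw [if_pos hha, if_pos hhb]
          have hua' : u = ca := hua
          have hvb' : v = cb := hvb
          have : (stackedBook m n).dist u v = k := by rw [hua', hvb']; exact hdcab
          rw [this] at hcond
          push_cast
          push_cast at hcond
          omega
        · rw [if_pos hha, if_pos hhb]
          have hub' : u = cb := hub
          have hva' : v = ca := hva
          have : (stackedBook m n).dist u v = k := by
            rw [hub', hva']; exact hdcba
          rw [this] at hcond
          push_cast
          push_cast at hcond
          omega
        · exact absurd (hva.symm.trans hvb) hcab
      · -- only ca
        rw [if_pos hha, if_neg hhb]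
        have hd : (stackedBook m n).dist u v ≤ k + 1 := by
          rcases hqamem p h1 h2 hha with hua | hva
          · have hua' : u = ca := hua
            rw [hua']; exact hdca v hvS
          · have hva' : v = ca := hva
            rw [hva']; exact hdca' u huS
        push_cast
        push_cast at hcond
        omega
      · -- only cb
        rw [if_neg hha, if_pos hhb]
        have hd : (stackedBook m n).dist u v ≤ k + 1 := by
          rcases hqbmem p h1 h2 hhb with hub | hvb
          · have hub' : u = cb := hub
            rw [hub']; exact hdcb v hvS
          · have hvb' : v = cb := hvb
            rw [hvb']; exact hdcb' u huS
        push_cast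
        push_cast at hcond
        omega
      · -- neither
        rw [if_neg hha, if_neg hhb]
        have hd := dist_le_S hm hk hn2 ht1 ht2 huS hvS
        push_cast
        push_cast at hcond
        omega
    have hlt1 : 2 * m - 1 < 2 * m := by omega
    have hlt0 : 0 < 2 * m := by omega
    have tele := Finset.sum_range_sub F (2 * m - 1)
    have e1 : ∑ p ∈ Finset.range (2 * m - 1), (if p = qa then (1 : ℤ) else 0) = 1 := by
      rw [Finset.sum_ite_eq' (Finset.range (2 * m - 1)) qa (fun _ => (1 : ℤ)),
        if_pos (Finset.mem_range.mpr hqalt)]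
    have e2 : ∑ p ∈ Finset.range (2 * m - 1), (if p = qb then (1 : ℤ) else 0) = 1 := by
      rw [Finset.sum_ite_eq' (Finset.range (2 * m - 1)) qb (fun _ => (1 : ℤ)),
        if_pos (Finset.mem_range.mpr hqblt)]
    have hsum : (((2 * m - 1) * (k + 1) + 2 : ℕ) : ℤ) ≤ F (2 * m - 1) - F 0 := by
      rw [← tele]
      have hle : ∑ p ∈ Finset.range (2 * m - 1),
          ((k + 1 : ℤ) + (if p = qa then 1 else 0) + (if p = qb then 1 else 0)) ≤
          ∑ p ∈ Finset.range (2 * m - 1), (F (p + 1) - F p) :=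
        Finset.sum_le_sum fun p hp => key p (Finset.mem_range.mp hp)
      refine le_trans (le_of_eq ?_) hle
      rw [Finset.sum_add_distrib, Finset.sum_add_distrib, e1, e2, Finset.sum_const,
        Finset.card_range, nsmul_eq_mul]
      push_cast
      ring
    have hFlast : F (2 * m - 1) = ((σ ⟨2 * m - 1, hlt1⟩ : ℕ) : ℤ) := by
      simp only [hF]; rw [dif_pos hlt1]
    have hF0 : F 0 = ((σ ⟨0, hlt0⟩ : ℕ) : ℤ) := by
      simp only [hF]; rw [dif_pos hlt0]
    have himg : f '' {p : Fin m × Fin n | (p.2 : ℕ) = t - 1 ∨ (p.2 : ℕ) = t + k - 1}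
        = ↑(T.image f) := by
      ext y
      simp only [Set.mem_image, Finset.coe_image, Finset.mem_coe, Finset.mem_image]
      constructor
      · rintro ⟨u, hu, rfl⟩; exact ⟨u, (hmemT u).2 hu, rfl⟩
      · rintro ⟨u, hu, rfl⟩; exact ⟨u, (hmemT u).1 hu, rfl⟩
    have hsupge : (σ ⟨2 * m - 1, hlt1⟩ : ℕ) ≤
        sSup (f '' {p : Fin m × Fin n | (p.2 : ℕ) = t - 1 ∨ (p.2 : ℕ) = t + k - 1}) := by
      rw [himg]
      exact le_csSup (T.image f).bddAbove (σ ⟨2 * m - 1, hlt1⟩).2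
    have hinfle : sInf (f '' {p : Fin m × Fin n |
        (p.2 : ℕ) = t - 1 ∨ (p.2 : ℕ) = t + k - 1}) ≤ (σ ⟨0, hlt0⟩ : ℕ) :=
      himg ▸ Nat.sInf_le (σ ⟨0, hlt0⟩).2
    rw [← span_val hm hk hn2]
    rw [hFlast, hF0] at hsum
    generalize hgen : (2 * m - 1) * (k + 1) + 2 = c at hsum ⊢
    omega
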